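/- arXiv:0811.3648 — 5 statements merged into one kernel-verified Lean document; each statement's English description precedes it below -/
import Mathlib

section
/- Let 0 ≤ ε < 1/2, let B, B' be nonnegative integers with (1−ε)B ≤ B' ≤ (1+ε)B and B ≤ K for a real K ≥ 1, and let A ≥ 0. Then K(1 − (1−1/K)^A)(1−1/K)^B lies between (1−2ε) and (1+2ε) times K(1 − (1−1/K)^A)(1−1/K)^{B'}. -/
/-!
Write `x = 1 - 1/K ∈ [0, 1)`. Since `|B - B'| ≤ εB ≤ εK`, Bernoulli's inequality gives
`x ^ |B - B'| ≥ 1 - |B - B'|/K ≥ 1 - ε`, so `x ^ B` and `x ^ B'` agree up to a factor `1 - ε`.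
This already gives the lower bound, and the upper bound follows from `(1 + 2ε)(1 - ε) ≥ 1`
for `ε ≤ 1/2`. The common factor `K (1 - x ^ A)` is nonnegative, so it can be multiplied through.
-/

theorem one_sub_le_one_sub_pow {t ε : ℝ} {n : ℕ} (ht : t ≤ 2) (h : n * t ≤ ε) :
    1 - ε ≤ (1 - t) ^ n := by
  have bernoulli := one_add_mul_le_pow (a := -t) (by linarith) n
  rw [← sub_eq_add_neg] at bernoulli
  linarith

theorem natCast_tsub_le_of_le_add {m n : ℕ} {c : ℝ} (hc : 0 ≤ c) (h : (m : ℝ) ≤ n + c) :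
    ((m - n : ℕ) : ℝ) ≤ c := by
  rcases le_total n m with hnm | hmn
  · rw [Nat.cast_sub hnm]
    linarith
  · rwa [Nat.sub_eq_zero_of_le hmn, Nat.cast_zero]

section UnitInterval

variable {x ε : ℝ} (hx0 : 0 ≤ x) (hx1 : x ≤ 1)
include hx0 hx1

theorem one_sub_mul_pow_le_pow {m n : ℕ} (hε : 0 ≤ ε) (h : 1 - ε ≤ x ^ (n - m)) :
    (1 - ε) * x ^ m ≤ x ^ n := by
  rcases le_total m n with hmn | hnm
  · rw [← pow_sub_mul_pow x hmn]
    exact mul_le_mul_of_nonneg_right h (pow_nonneg hx0 m)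
  · calc (1 - ε) * x ^ m ≤ 1 * x ^ m := by gcongr; linarith
      _ = x ^ m := one_mul _
      _ ≤ x ^ n := pow_le_pow_of_le_one hx0 hx1 hnm

theorem pow_mem_Icc_mul_pow {m n : ℕ} (hε0 : 0 ≤ ε) (hε : ε ≤ 1 / 2)
    (hmn : 1 - ε ≤ x ^ (m - n)) (hnm : 1 - ε ≤ x ^ (n - m)) :
    x ^ m ∈ Set.Icc ((1 - 2 * ε) * x ^ n) ((1 + 2 * ε) * x ^ n) := by
  have hm := one_sub_mul_pow_le_pow hx0 hx1 hε0 hnm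
  have hn := one_sub_mul_pow_le_pow hx0 hx1 hε0 hmn
  have hxm : 0 ≤ x ^ m := pow_nonneg hx0 m
  have hxn : 0 ≤ x ^ n := pow_nonneg hx0 n
  constructor
  · nlinarith
  · -- `(1 + 2ε)(1 - ε) = 1 + ε(1 - 2ε) ≥ 1`
    nlinarith [mul_nonneg (mul_nonneg hε0 (by linarith : (0 : ℝ) ≤ 1 - 2 * ε)) hxm]

end UnitInterval

/-- Let `0 ≤ ε < 1/2`, let `B, B'` be nonnegative integers with `(1−ε)B ≤ B' ≤ (1+ε)B`
and `B ≤ K` for a real `K ≥ 1`, and let `A ≥ 0`.  Then `K(1 − (1−1/K)^A)(1−1/K)^B` lies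
between `(1−2ε)` and `(1+2ε)` times `K(1 − (1−1/K)^A)(1−1/K)^{B'}`. -/
theorem stmt_8 (ε : ℝ) (hε0 : 0 ≤ ε) (hε : ε < 1 / 2) (B B' : ℕ) (K : ℝ) (hK : 1 ≤ K)
    (h1 : (1 - ε) * B ≤ (B' : ℝ)) (h2 : (B' : ℝ) ≤ (1 + ε) * B) (hB : (B : ℝ) ≤ K)
    (A : ℝ) (hA : 0 ≤ A) :
    (1 - 2 * ε) * (K * (1 - (1 - 1 / K) ^ A) * (1 - 1 / K) ^ (B' : ℝ))
        ≤ K * (1 - (1 - 1 / K) ^ A) * (1 - 1 / K) ^ (B : ℝ) ∧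
      K * (1 - (1 - 1 / K) ^ A) * (1 - 1 / K) ^ (B : ℝ)
        ≤ (1 + 2 * ε) * (K * (1 - (1 - 1 / K) ^ A) * (1 - 1 / K) ^ (B' : ℝ)) := by
  have hK0 : 0 < K := by linarith
  have hinv0 : 0 ≤ 1 / K := by positivity
  have hinv1 : 1 / K ≤ 1 := by rwa [div_le_one hK0]
  have hx0 : 0 ≤ 1 - 1 / K := by linarith
  have hx1 : 1 - 1 / K ≤ 1 := by linarith
  have hεB : ε * B ≤ ε * K := mul_le_mul_of_nonneg_left hB hε0
  have gap {m n : ℕ} (h : (m : ℝ) ≤ n + ε * K) : 1 - ε ≤ (1 - 1 / K) ^ (m - n) := by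
    refine one_sub_le_one_sub_pow (by linarith) ?_
    rw [mul_one_div, div_le_iff₀ hK0]
    exact natCast_tsub_le_of_le_add (by positivity) h
  obtain ⟨hlow, hupp⟩ := pow_mem_Icc_mul_pow (m := B) (n := B') hx0 hx1 hε0 hε.le
    (gap (by linarith)) (gap (by linarith))
  have hC : 0 ≤ K * (1 - (1 - 1 / K) ^ A) :=
    mul_nonneg hK0.le (sub_nonneg.2 (Real.rpow_le_one hx0 hx1 hA))
  rw [Real.rpow_natCast, Real.rpow_natCast, mul_left_comm _ (K * _), mul_left_comm _ (K * _)]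
  exact ⟨mul_le_mul_of_nonneg_left hlow hC, mul_le_mul_of_nonneg_left hupp hC⟩
end

section
/- For all real t and real n ≥ 1 with |t| ≤ n: e^t(1 − t²/n) ≤ (1 + t/n)^n ≤ e^t. -/
/-!
Put `x = t / n`, so `|x| ≤ 1` and `exp t = (exp x) ^ n`. The upper bound is `1 + x ≤ exp x`
raised to the power `n`. For the lower bound, `1 - x ≤ exp (-x)` gives
`exp x * (1 - x ^ 2) ≤ 1 + x`; raising to the power `n` and applying Bernoulli's inequality
`1 - n x ^ 2 ≤ (1 - x ^ 2) ^ n` yields `exp t * (1 - t ^ 2 / n) ≤ (1 + x) ^ n`.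
-/

open Real

lemma Real.exp_mul_one_sub_sq_le_one_add {x : ℝ} (hx : -1 ≤ x) :
    exp x * (1 - x ^ 2) ≤ 1 + x :=
  calc exp x * (1 - x ^ 2) = exp x * (1 - x) * (1 + x) := by ring
    _ ≤ exp x * exp (-x) * (1 + x) := by
        gcongr
        · linarith
        · exact one_sub_le_exp_neg x
    _ = 1 + x := by rw [← exp_add, add_neg_cancel, exp_zero, one_mul]

lemma Real.exp_div_rpow {t n : ℝ} (hn : n ≠ 0) : exp (t / n) ^ n = exp t := by
  rw [← exp_mul, div_mul_cancel₀ t hn]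

lemma Real.one_add_div_rpow_le_exp {t n : ℝ} (hn : 0 < n) (ht : -n ≤ t) :
    (1 + t / n) ^ n ≤ exp t := by
  have hx : -1 ≤ t / n := by rwa [le_div_iff₀ hn, neg_one_mul]
  calc (1 + t / n) ^ n ≤ exp (t / n) ^ n := by
        gcongr
        · linarith
        · linarith [add_one_le_exp (t / n)]
    _ = exp t := exp_div_rpow hn.ne'

lemma Real.exp_mul_one_sub_sq_div_le_one_add_div_rpow {t n : ℝ} (hn : 1 ≤ n) (ht : |t| ≤ n) :
    exp t * (1 - t ^ 2 / n) ≤ (1 + t / n) ^ n := by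
  have hn0 : 0 < n := by linarith
  set x := t / n with hx
  have hx_abs : |x| ≤ 1 := by rwa [abs_div, abs_of_pos hn0, div_le_one hn0]
  have hx_sq : x ^ 2 ≤ 1 := by rwa [sq_le_one_iff_abs_le_one]
  have hx_ge : -1 ≤ x := (abs_le.mp hx_abs).1
  calc exp t * (1 - t ^ 2 / n) = exp t * (1 + n * -x ^ 2) := by
        rw [hx]; field_simp; ring
    _ ≤ exp t * (1 + -x ^ 2) ^ n := by
        gcongr
        exact one_add_mul_self_le_rpow_one_add (by linarith) hn
    _ = (exp x * (1 - x ^ 2)) ^ n := by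
        rw [mul_rpow (exp_pos x).le (by linarith), exp_div_rpow hn0.ne', sub_eq_add_neg]
    _ ≤ (1 + x) ^ n :=
        rpow_le_rpow (mul_nonneg (exp_pos x).le (by linarith)) (exp_mul_one_sub_sq_le_one_add hx_ge)
          hn0.le

/-- For all real `t` and real `n ≥ 1` with `|t| ≤ n`:
`e^t(1 − t²/n) ≤ (1 + t/n)^n ≤ e^t`, where `(1 + t/n)^n` is the real power. -/
theorem stmt_9 (t n : ℝ) (hn : 1 ≤ n) (ht : |t| ≤ n) :
    Real.exp t * (1 - t ^ 2 / n) ≤ (1 + t / n) ^ n ∧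
      (1 + t / n) ^ n ≤ Real.exp t :=
  ⟨exp_mul_one_sub_sq_div_le_one_add_div_rpow hn ht,
    one_add_div_rpow_le_exp (by linarith) (neg_le_of_abs_le ht)⟩
end

section
/- If A, B ≤ K/4 (K ≥ 1), then the variance of the number of bins hit by at least one of A good balls and none of B bad balls, when all balls are thrown independently and uniformly into K bins, is at most 7K. -/
/-!
Write `X = ∑ᵢ Xᵢ`, where `Xᵢ` indicates that bin `i` is hit by a good ball and by no bad ball.
For `i ≠ j` the indicators are negatively correlated: for the balls of one colour, "bins `i` and
`j` both missed" has probability `(1 - 2/K)^n ≤ (1 - 1/K)^(2n)`, and negative correlation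
survives complementation (hit rather than missed), independent coordinates and products of
independent experiments. Hence `Var X ≤ ∑ᵢ Var Xᵢ ≤ K/4`.
-/

open Finset

/-- The number of bins (out of `K`) receiving at least one of the `A` good balls
(placement `g`) and none of the `B` bad balls (placement `b`). -/
def goodBins (A B K : ℕ) (g : Fin A → Fin K) (b : Fin B → Fin K) : ℕ :=
  (Finset.univ.filter (fun i : Fin K => (∃ a, g a = i) ∧ ∀ j, b j ≠ i)).card

section NegCorrelated

variable {Ω : Type*} [Fintype Ω] [DecidableEq Ω]

/-- `P(S ∩ T) ≤ P(S) P(T)` for the uniform distribution on `Ω`, cleared of denominators. -/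
def NegCorrelated (S T : Finset Ω) : Prop :=
  Fintype.card Ω * #(S ∩ T) ≤ #S * #T

theorem negCorrelated_singleton {i j : Ω} (hij : i ≠ j) : NegCorrelated {i} {j} := by
  simp [NegCorrelated, hij]

theorem NegCorrelated.compl {S T : Finset Ω} (h : NegCorrelated S T) :
    NegCorrelated Sᶜ Tᶜ := by
  unfold NegCorrelated at *
  have hS := card_le_univ S
  have hT := card_le_univ T
  have hU := card_le_univ (S ∪ T)
  have hST := card_union_add_card_inter S T
  rw [← compl_union, card_compl, card_compl, card_compl]
  zify [hS, hT, hU] at *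
  nlinarith

theorem NegCorrelated.product {α β : Type*} [Fintype α] [DecidableEq α] [Fintype β]
    [DecidableEq β] {S T : Finset α} {U V : Finset β}
    (hST : NegCorrelated S T) (hUV : NegCorrelated U V) :
    NegCorrelated (S ×ˢ U) (T ×ˢ V) := by
  unfold NegCorrelated at *
  rw [product_inter_product, card_product, card_product, card_product, Fintype.card_prod]
  calc _ = (Fintype.card α * #(S ∩ T)) * (Fintype.card β * #(U ∩ V)) := by ring
    _ ≤ (#S * #T) * (#U * #V) := Nat.mul_le_mul hST hUV
    _ = _ := by ring

theorem NegCorrelated.piFinset {ι : Type*} [Fintype ι] [DecidableEq ι] {δ : ι → Type*}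
    [∀ a, Fintype (δ a)] [∀ a, DecidableEq (δ a)] {s t : ∀ a, Finset (δ a)}
    (h : ∀ a, NegCorrelated (s a) (t a)) :
    NegCorrelated (Fintype.piFinset s) (Fintype.piFinset t) := by
  unfold NegCorrelated at *
  rw [← Fintype.piFinset_inter, Fintype.card_piFinset, Fintype.card_piFinset,
    Fintype.card_piFinset, Fintype.card_pi, ← prod_mul_distrib, ← prod_mul_distrib]
  exact prod_le_prod' fun a _ => h a

end NegCorrelated

section Moments

variable {Ω ι : Type*} [Fintype Ω] [Fintype ι] [DecidableEq ι]

theorem card_eq_sum_ite_mem (s : Finset ι) : #s = ∑ i, if i ∈ s then 1 else 0 := by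
  rw [← card_filter, filter_mem_eq_inter, univ_inter]

theorem sum_card_eq_sum_card_filter_mem (s : Ω → Finset ι) :
    ∑ ω, #(s ω) = ∑ i, #{ω | i ∈ s ω} := by
  simp only [card_eq_sum_ite_mem (s _), card_filter]
  exact sum_comm

theorem sum_card_sq_eq_sum_card_filter_mem (s : Ω → Finset ι) :
    ∑ ω, #(s ω) ^ 2 = ∑ i, ∑ j, #{ω | i ∈ s ω ∧ j ∈ s ω} := by
  simp only [sq, card_eq_sum_ite_mem (s _), sum_mul_sum, ite_zero_mul_ite_zero, mul_one,
    card_filter]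
  rw [sum_comm]
  exact sum_congr rfl fun i _ => sum_comm

end Moments

-- Also true for `N = 0`, where both sides are `0` since `x / 0 = 0`.
theorem div_sub_div_sq_eq {K : Type*} [Field K] (a b N : K) :
    a / N - (b / N) ^ 2 = (N * a - b ^ 2) / N ^ 2 := by
  rcases eq_or_ne N 0 with rfl | hN
  · simp
  · field_simp

theorem variance_card_le_of_negCorrelated {Ω ι : Type*} [Fintype Ω] [DecidableEq Ω] [Fintype ι]
    [DecidableEq ι] (s : Ω → Finset ι)
    (h : ∀ i j, i ≠ j → NegCorrelated {ω | i ∈ s ω} {ω | j ∈ s ω}) :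
    (∑ ω, (#(s ω) : ℝ) ^ 2) / Fintype.card Ω - ((∑ ω, (#(s ω) : ℝ)) / Fintype.card Ω) ^ 2
      ≤ Fintype.card ι / 4 := by
  set N : ℝ := (Fintype.card Ω : ℝ)
  set e : ι → ℝ := fun i => #{ω | i ∈ s ω}
  set e₂ : ι → ι → ℝ := fun i j => #{ω | i ∈ s ω ∧ j ∈ s ω}
  have first_moment : ∑ ω, (#(s ω) : ℝ) = ∑ i, e i := by
    simp only [e]
    exact_mod_cast sum_card_eq_sum_card_filter_mem s
  have second_moment : ∑ ω, (#(s ω) : ℝ) ^ 2 = ∑ i, ∑ j, e₂ i j := by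
    simp only [e₂]
    exact_mod_cast sum_card_sq_eq_sum_card_filter_mem s
  have covariance_le i j : N * e₂ i j - e i * e j ≤ if i = j then N ^ 2 / 4 else 0 := by
    split_ifs with hij
    · subst hij
      have : e₂ i i = e i := by simp only [e₂, e, and_self]
      rw [this]
      nlinarith [sq_nonneg (N - 2 * e i)]
    · have := h i j hij
      rw [NegCorrelated, ← filter_and] at this
      simp only [N, e, e₂, sub_nonpos]
      exact_mod_cast this
  rw [first_moment, second_moment, div_sub_div_sq_eq]
  refine div_le_of_le_mul₀ (sq_nonneg N) (by positivity) ?_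
  calc N * ∑ i, ∑ j, e₂ i j - (∑ i, e i) ^ 2 = ∑ i, ∑ j, (N * e₂ i j - e i * e j) := by
        rw [sq, sum_mul_sum, mul_sum]
        simp only [mul_sum, sum_sub_distrib]
    _ ≤ ∑ i, ∑ j, if i = j then N ^ 2 / 4 else 0 := by
        gcongr with i _ j _
        exact covariance_le i j
    _ = Fintype.card ι / 4 * N ^ 2 := by
        simp only [sum_ite_eq, mem_univ, if_true, sum_const, card_univ, nsmul_eq_mul]
        ring

theorem stmt_13_general (A B K : ℕ) :
    (∑ g : Fin A → Fin K, ∑ b : Fin B → Fin K, (goodBins A B K g b : ℝ) ^ 2)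
          / ((K : ℝ) ^ A * (K : ℝ) ^ B)
        - ((∑ g : Fin A → Fin K, ∑ b : Fin B → Fin K, (goodBins A B K g b : ℝ))
            / ((K : ℝ) ^ A * (K : ℝ) ^ B)) ^ 2
      ≤ 7 * K := by
  let s : (Fin A → Fin K) × (Fin B → Fin K) → Finset (Fin K) :=
    fun ω => {i | (∃ a, ω.1 a = i) ∧ ∀ j, ω.2 j ≠ i}
  have event (i : Fin K) : ({ω | i ∈ s ω} : Finset ((Fin A → Fin K) × (Fin B → Fin K))) =
      (Fintype.piFinset fun _ => {i}ᶜ)ᶜ ×ˢ Fintype.piFinset fun _ => {i}ᶜ := by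
    ext ⟨g, b⟩
    simp [s]
  have variance_le := variance_card_le_of_negCorrelated s fun i j hij => by
    have avoid {n : ℕ} : NegCorrelated (Fintype.piFinset fun _ : Fin n => ({i}ᶜ : Finset (Fin K)))
        (Fintype.piFinset fun _ => {j}ᶜ) :=
      .piFinset fun _ => (negCorrelated_singleton hij).compl
    rw [event, event]
    exact avoid.compl.product avoid
  simp only [Fintype.sum_prod_type, Fintype.card_prod, Fintype.card_fun, Fintype.card_fin,
    Nat.cast_mul, Nat.cast_pow] at variance_le
  calc _ ≤ (K : ℝ) / 4 := variance_le
    _ ≤ 7 * K := by linarith [K.cast_nonneg (α := ℝ)]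

/-- If `A, B ≤ K/4`, then the variance of the number of bins hit by at least one of `A`
good balls and none of `B` bad balls, when all balls are thrown independently and
uniformly into `K ≥ 1` bins, is at most `7K`. -/
theorem stmt_13 (A B K : ℕ) (hK : 1 ≤ K)
    (hA : (A : ℝ) ≤ K / 4) (hB : (B : ℝ) ≤ K / 4) :
    (∑ g : Fin A → Fin K, ∑ b : Fin B → Fin K, (goodBins A B K g b : ℝ) ^ 2)
          / ((K : ℝ) ^ A * (K : ℝ) ^ B)
        - ((∑ g : Fin A → Fin K, ∑ b : Fin B → Fin K, (goodBins A B K g b : ℝ))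
            / ((K : ℝ) ^ A * (K : ℝ) ^ B)) ^ 2
      ≤ 7 * K :=
  stmt_13_general A B K
end

section
/- If B = 0 and 100 ≤ A ≤ K/20, then for A balls thrown independently and uniformly into K bins, the variance of the number of nonempty bins is strictly less than 4A²/K. -/
/-- The number of nonempty bins when `A` balls are placed into `K` bins according to
`g`. -/
def nonemptyBins (A K : ℕ) (g : Fin A → Fin K) : ℕ :=
  (Finset.univ.filter (fun i : Fin K => ∃ a, g a = i)).card

/-!
Count empty bins instead: their number is `K` minus the number of nonempty bins, so it has the
same variance. Exactly `(K - |S|)^A` maps avoid a set `S` of bins, so double counting gives the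
first two moments, and the variance is `K(K-1)q + Kp - K²p²` with `p = (1-1/K)^A`,
`q = (1-2/K)^A`. Since `1 - 2/K = (1-1/K)²(1 - 1/(K-1)²)`, Bernoulli's inequality gives
`q (1 + A/(K-1)²) ≤ p²`, and also `p ≥ 1 - A/K`; together these bound the variance by
`K A²/(K-1)²`, which is less than `4A²/K` as soon as `K ≥ 3`.
-/

open Finset

section Counting

variable {α β : Type*} [Fintype α] [Fintype β] [DecidableEq β]

lemma card_filter_forall_apply_notMem [DecidableEq α] (S : Finset β) :
    #{f : α → β | ∀ a, f a ∉ S} = (Fintype.card β - #S) ^ Fintype.card α := by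
  have : ({f : α → β | ∀ a, f a ∉ S} : Finset _) = Fintype.piFinset fun _ ↦ Sᶜ := by
    ext f; simp [Fintype.mem_piFinset]
  rw [this, Fintype.card_piFinset, prod_const, card_compl, card_univ]

def emptyBins (f : α → β) : ℕ := #{b | ∀ a, f a ≠ b}

lemma sum_emptyBins [DecidableEq α] :
    ∑ f : α → β, emptyBins f = Fintype.card β * (Fintype.card β - 1) ^ Fintype.card α := by
  have avoid (b : β) : #{f : α → β | ∀ a, f a ≠ b} = (Fintype.card β - 1) ^ Fintype.card α := by
    simpa using card_filter_forall_apply_notMem (α := α) {b}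
  simp only [emptyBins, card_filter]
  rw [sum_comm]
  simp only [← card_filter, avoid, sum_const, card_univ, smul_eq_mul]

lemma emptyBins_sq (f : α → β) :
    emptyBins f ^ 2 = #{p : β × β | ∀ a, f a ∉ ({p.1, p.2} : Finset β)} := by
  rw [emptyBins, sq, ← card_product]
  congr 1; ext p; simp [forall_and]

lemma sum_emptyBins_sq [DecidableEq α] :
    ∑ f : α → β, emptyBins f ^ 2 = Fintype.card β * (Fintype.card β - 1) ^ Fintype.card α
      + Fintype.card β * (Fintype.card β - 1) * (Fintype.card β - 2) ^ Fintype.card α := by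
  simp only [emptyBins_sq, card_filter]
  rw [sum_comm]
  simp only [← card_filter, card_filter_forall_apply_notMem]
  have hdiag : ∀ p ∈ (univ : Finset β).diag, #{p.1, p.2} = 1 := fun p hp ↦ by
    rw [(mem_diag.1 hp).2, pair_eq_singleton, card_singleton]
  have hoffDiag : ∀ p ∈ (univ : Finset β).offDiag, #{p.1, p.2} = 2 := fun p hp ↦
    card_pair (mem_offDiag.1 hp).2.2
  rw [← univ_product_univ, ← diag_union_offDiag, sum_union (disjoint_diag_offDiag _),
    sum_congr rfl fun p hp ↦ by rw [hdiag p hp],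
    sum_congr (s₁ := univ.offDiag) rfl fun p hp ↦ by rw [hoffDiag p hp]]
  simp [Nat.mul_sub_one]

end Counting

lemma nonemptyBins_add_emptyBins {A K : ℕ} (g : Fin A → Fin K) :
    nonemptyBins A K g + emptyBins g = K := by
  have := card_filter_add_card_filter_not (s := univ) (fun i : Fin K ↦ ∃ a, g a = i)
  simp only [not_exists, card_univ, Fintype.card_fin] at this
  simpa only [nonemptyBins, emptyBins, ne_eq] using this

lemma sum_sq_div_sub_sq_sum_div_const_sub {ι : Type*} (s : Finset ι) (c : ℝ) (x : ι → ℝ) :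
    (∑ i ∈ s, (c - x i) ^ 2) / #s - ((∑ i ∈ s, (c - x i)) / #s) ^ 2
      = (∑ i ∈ s, x i ^ 2) / #s - ((∑ i ∈ s, x i) / #s) ^ 2 := by
  rcases s.eq_empty_or_nonempty with rfl | hs
  · simp
  have : (#s : ℝ) ≠ 0 := by exact_mod_cast hs.card_ne_zero
  simp only [sub_sq, sum_add_distrib, sum_sub_distrib, sum_const, nsmul_eq_mul, ← mul_sum]
  field_simp
  ring

noncomputable def occupancyVariance (k : ℝ) (n : ℕ) : ℝ :=
  k * (k - 1) * (1 - 2 / k) ^ n + k * (1 - 1 / k) ^ n - k ^ 2 * (1 - 1 / k) ^ (2 * n)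

lemma emptyBins_variance_eq {α β : Type*} [Fintype α] [DecidableEq α] [Fintype β]
    [DecidableEq β] (hβ : 2 ≤ Fintype.card β) :
    (∑ f : α → β, (emptyBins f : ℝ) ^ 2) / Fintype.card (α → β)
        - ((∑ f : α → β, (emptyBins f : ℝ)) / Fintype.card (α → β)) ^ 2
      = occupancyVariance (Fintype.card β) (Fintype.card α) := by
  have h₁ := congrArg (Nat.cast (R := ℝ)) (sum_emptyBins (α := α) (β := β))
  have h₂ := congrArg (Nat.cast (R := ℝ)) (sum_emptyBins_sq (α := α) (β := β))
  push_cast [Nat.cast_sub hβ, Nat.cast_sub (one_le_two.trans hβ)] at h₁ h₂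
  have : (Fintype.card β : ℝ) ≠ 0 := by positivity
  rw [h₁, h₂, Fintype.card_fun, occupancyVariance]
  push_cast
  simp only [one_sub_div this, div_pow]
  field_simp
  ring

lemma one_add_mul_mul_one_sub_pow_le_one {s : ℝ} (hs₀ : -1 ≤ s) (hs₁ : s ≤ 1) (n : ℕ) :
    (1 + n * s) * (1 - s) ^ n ≤ 1 :=
  calc (1 + n * s) * (1 - s) ^ n ≤ (1 + s) ^ n * (1 - s) ^ n :=
        mul_le_mul_of_nonneg_right (one_add_mul_le_pow (by linarith) n) (by simp [hs₁])
    _ = (1 - s ^ 2) ^ n := by rw [← mul_pow]; ring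
    _ ≤ 1 := pow_le_one₀ (by nlinarith) (by nlinarith)

lemma one_sub_two_div_eq {k : ℝ} (hk₀ : k ≠ 0) (hk₁ : k - 1 ≠ 0) :
    1 - 2 / k = (1 - 1 / k) ^ 2 * (1 - 1 / (k - 1) ^ 2) := by
  field_simp
  ring

lemma one_sub_two_div_pow_mul_le {k : ℝ} (hk : 2 ≤ k) (n : ℕ) :
    (1 - 2 / k) ^ n * (1 + n / (k - 1) ^ 2) ≤ ((1 - 1 / k) ^ n) ^ 2 := by
  have hs : 1 / (k - 1) ^ 2 ≤ 1 := by rw [div_le_one] <;> nlinarith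
  have := one_add_mul_mul_one_sub_pow_le_one
    (by linarith [show 0 ≤ 1 / (k - 1) ^ 2 by positivity]) hs n
  rw [one_sub_two_div_eq (by positivity) (by linarith), mul_pow, ← pow_mul, mul_comm 2 n,
    pow_mul, div_eq_mul_one_div (n : ℝ)]
  nlinarith [sq_nonneg ((1 - 1 / k) ^ n)]

theorem occupancyVariance_lt {k : ℝ} {n : ℕ} (hk : 3 ≤ k) (hn : 0 < n) :
    occupancyVariance k n < 4 * n ^ 2 / k := by
  set p := (1 - 1 / k) ^ n with hp_def
  set t : ℝ := n / (k - 1) ^ 2 with ht_def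
  have hk₁ : 0 < k - 1 := by linarith
  have ht : 0 ≤ t := by positivity
  have hk₀ : 0 < 1 / k := by positivity
  have hk₃ : 1 / k ≤ 1 / 3 := one_div_le_one_div_of_le (by norm_num) hk
  have hp₀ : 0 ≤ p := pow_nonneg (by linarith) n
  have hp₁ : p ≤ 1 := pow_le_one₀ (by linarith) (by linarith)
  have hp : 1 - n / k ≤ p := by
    have := one_add_mul_sub_le_pow (a := 1 - 1 / k) (by linarith) n
    linarith [show (n : ℝ) * (1 - 1 / k - 1) = -(n / k) by ring]
  have hq : (1 - 2 / k) ^ n * (1 + t) ≤ p ^ 2 := one_sub_two_div_pow_mul_le (by linarith) n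
  have hbracket : 1 + t - p * (1 + k * t) ≤ n ^ 2 / (k - 1) ^ 2 := by
    have h₁ : (1 - n / k) * (1 + k * t) ≤ p * (1 + k * t) :=
      mul_le_mul_of_nonneg_right hp (by positivity)
    have h₂ : 1 + t - (1 - n / k) * (1 + k * t)
        = n ^ 2 / (k - 1) ^ 2 - (n / (k - 1) - n / k) := by
      rw [ht_def]; field_simp; ring
    have h₃ : n / k ≤ n / (k - 1) := div_le_div_of_nonneg_left (by positivity) hk₁ (by linarith)
    linarith
  have hVt : occupancyVariance k n * (1 + t) ≤ k * (n ^ 2 / (k - 1) ^ 2) := by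
    have h₁ := mul_le_mul_of_nonneg_left hq (by nlinarith : 0 ≤ k * (k - 1))
    have h₂ := mul_le_mul_of_nonneg_left hbracket (by positivity : 0 ≤ k * p)
    have h₃ : k * p * (n ^ 2 / (k - 1) ^ 2) ≤ k * (n ^ 2 / (k - 1) ^ 2) :=
      mul_le_mul_of_nonneg_right (mul_le_of_le_one_right (by linarith) hp₁) (by positivity)
    rw [occupancyVariance, pow_mul', ← hp_def]
    linear_combination h₁ + h₂ + h₃
  have hV : occupancyVariance k n ≤ k * (n ^ 2 / (k - 1) ^ 2) :=
    calc _ ≤ k * (n ^ 2 / (k - 1) ^ 2) / (1 + t) := by rwa [le_div_iff₀ (by positivity)]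
      _ ≤ k * (n ^ 2 / (k - 1) ^ 2) := div_le_self (by positivity) (by linarith)
  refine hV.trans_lt ?_
  rw [mul_div_assoc', div_lt_div_iff₀ (by positivity) (by positivity)]
  have : 0 < (n : ℝ) ^ 2 * ((3 * k - 2) * (k - 2)) := mul_pos (by positivity) (by nlinarith)
  linarith

/-- If `100 ≤ A ≤ K/20`, then for `A` balls thrown independently and uniformly into `K`
bins, the variance of the number of nonempty bins is strictly less than `4A²/K`. -/
theorem stmt_14 (A K : ℕ) (hA : 100 ≤ A) (hAK : (A : ℝ) ≤ K / 20) :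
    (∑ g : Fin A → Fin K, (nonemptyBins A K g : ℝ) ^ 2) / (K : ℝ) ^ A
        - ((∑ g : Fin A → Fin K, (nonemptyBins A K g : ℝ)) / (K : ℝ) ^ A) ^ 2
      < 4 * (A : ℝ) ^ 2 / K := by
  have hK : 3 ≤ K := by
    exact_mod_cast (by linarith [show (100 : ℝ) ≤ A by exact_mod_cast hA] : (3 : ℝ) ≤ K)
  have hcomplement (g : Fin A → Fin K) : (nonemptyBins A K g : ℝ) = K - emptyBins g := by
    rw [eq_sub_iff_add_eq]; exact_mod_cast nonemptyBins_add_emptyBins g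
  have hcard : (K : ℝ) ^ A = #(univ : Finset (Fin A → Fin K)) := by simp
  simp only [hcomplement]
  rw [hcard, sum_sq_div_sub_sq_sum_div_const_sub, card_univ,
    emptyBins_variance_eq (by simp; omega)]
  simpa using occupancyVariance_lt (by exact_mod_cast hK) (by omega : 0 < A)
end

section
/- For any 0 < ε < 1 and any integer K = 1/ε² ≥ 4, and any integer c with 1 ≤ c ≤ 4K/5, if c' is the result of rounding c/K to the nearest point of a geometric discretization of [1/5·K⁻¹·K, 1] with ratio (1+ε/15) — i.e., |c' − c| ≤ (ε/15)c — then |ln(1 − c'/K) − ln(1 − c/K)| ≤ (ε/3)|ln(1 − c/K)|. -/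
/-
Write `x = c / K ≤ 4/5` and `y = c' / K`, so that `|y - x| ≤ (ε/15) x`. Both `1 - x` and `1 - y`
are at least `m = 1 - (16/15) x > 0`, and `log` is `1/m`-Lipschitz on `[m, ∞)`, so the left-hand
side is at most `(ε/15) x / m`. On the other hand `|log (1 - x)| ≥ x + x²/2` (the first two terms
of its power series), and `(1 - 16x/15)(1 + x/2) ≥ 1/5` for `0 ≤ x ≤ 4/5` closes the estimate.
-/

open Real

lemma abs_log_sub_log_le_div {a b m : ℝ} (hm : 0 < m) (ha : m ≤ a) (hb : m ≤ b) :
    |log a - log b| ≤ |a - b| / m := by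
  wlog hba : b ≤ a generalizing a b
  · rw [abs_sub_comm, abs_sub_comm a]
    exact this hb ha (le_of_not_ge hba)
  have hb0 : 0 < b := hm.trans_le hb
  have hlog : log a - log b ≤ (a - b) / b := by
    rw [← log_div (hb0.trans_le hba).ne' hb0.ne', sub_div, div_self hb0.ne']
    exact log_le_sub_one_of_pos (div_pos (hb0.trans_le hba) hb0)
  rw [abs_of_nonneg (sub_nonneg.2 (log_le_log hb0 hba)), abs_of_nonneg (sub_nonneg.2 hba)]
  exact hlog.trans (div_le_div_of_nonneg_left (sub_nonneg.2 hba) hm hb)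

lemma add_sq_div_two_le_neg_log_one_sub {x : ℝ} (hx0 : 0 ≤ x) (hx1 : x < 1) :
    x + x ^ 2 / 2 ≤ -log (1 - x) := by
  have hsum := hasSum_pow_div_log_of_abs_lt_one (by rwa [abs_of_nonneg hx0])
  have h := sum_le_hasSum (Finset.range 2) (fun i _ => by positivity) hsum
  norm_num [Finset.sum_range_succ] at h
  linarith

lemma abs_log_one_sub_sub_log_one_sub_le {ε x y : ℝ} (hε0 : 0 ≤ ε) (hε1 : ε ≤ 1)
    (hx0 : 0 ≤ x) (hx : x ≤ 4 / 5) (hy : |y - x| ≤ ε / 15 * x) :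
    |log (1 - y) - log (1 - x)| ≤ ε / 3 * |log (1 - x)| := by
  set m := 1 - 16 / 15 * x with hm_def
  have hm : 0 < m := by linarith
  have hyx : y ≤ 16 / 15 * x := by nlinarith [(abs_le.1 hy).2]
  have hlog : x + x ^ 2 / 2 ≤ |log (1 - x)| :=
    (add_sq_div_two_le_neg_log_one_sub hx0 (by linarith)).trans (neg_le_abs _)
  have hpoly : 1 / 5 ≤ m * (1 + x / 2) := by
    rw [hm_def]
    nlinarith [mul_nonneg (sub_nonneg.2 hx) hx0]
  calc |log (1 - y) - log (1 - x)| ≤ |(1 - y) - (1 - x)| / m :=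
        abs_log_sub_log_le_div hm (by linarith) (by linarith)
    _ = |y - x| / m := by rw [sub_sub_sub_cancel_left, abs_sub_comm]
    _ ≤ ε / 15 * x / m := by gcongr
    _ ≤ ε / 3 * (x + x ^ 2 / 2) := by
      rw [div_le_iff₀ hm]
      nlinarith [mul_nonneg hε0 hx0]
    _ ≤ ε / 3 * |log (1 - x)| := by gcongr

theorem stmt_19_general (ε : ℝ) (hε0 : 0 < ε) (hε1 : ε < 1) (K : ℕ)
    (c : ℕ) (hc2 : (c : ℝ) ≤ 4 * K / 5)
    (c' : ℝ) (hc' : |c' - c| ≤ (ε / 15) * c) :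
    |Real.log (1 - c' / K) - Real.log (1 - (c : ℝ) / K)|
      ≤ (ε / 3) * |Real.log (1 - (c : ℝ) / K)| := by
  refine abs_log_one_sub_sub_log_one_sub_le hε0.le hε1.le (by positivity) ?_ ?_
  · exact div_le_of_le_mul₀ (Nat.cast_nonneg K) (by norm_num) (by linarith)
  · rw [← sub_div, abs_div, Nat.abs_cast, ← mul_div_assoc]
    exact div_le_div_of_nonneg_right hc' (Nat.cast_nonneg K)

/-- For `0 < ε < 1`, integer `K = 1/ε² ≥ 4`, and any integer `1 ≤ c ≤ 4K/5`, if
`c'` approximates `c` with relative error `ε/15` (as in rounding `c/K` to a geometric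
discretization with ratio `1 + ε/15`), then
`|ln(1 − c'/K) − ln(1 − c/K)| ≤ (ε/3)|ln(1 − c/K)|`. -/
theorem stmt_19 (ε : ℝ) (hε0 : 0 < ε) (hε1 : ε < 1) (K : ℕ) (hK4 : 4 ≤ K)
    (hKε : (K : ℝ) = 1 / ε ^ 2) (c : ℕ) (hc1 : 1 ≤ c) (hc2 : (c : ℝ) ≤ 4 * K / 5)
    (c' : ℝ) (hc' : |c' - c| ≤ (ε / 15) * c) :
    |Real.log (1 - c' / K) - Real.log (1 - (c : ℝ) / K)|
      ≤ (ε / 3) * |Real.log (1 - (c : ℝ) / K)| :=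
  stmt_19_general ε hε0 hε1 K c hc2 c' hc'
end
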